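/- arXiv:1309.5570 — 6 statements merged into one kernel-verified Lean document; each statement's English description precedes it below -/
import Mathlib

section
/- Let R be a unital ring, n ≥ 2, and M a 2-torsion free Mₙ(R)-bimodule. Then every generalized Jordan derivation D : Mₙ(R) → M is a generalized derivation, i.e., D(AB) = D(A)B + AD(B) - AD(1)B for all A, B. -/
/-- A (not necessarily unital) bimodule structure of a ring `A` on an
additive group `M`, given by a left action `l` and a right action `r`. -/
structure RingBimod (A M : Type*) [Ring A] [AddCommGroup M] where
  l : A → M → M
  r : M → A → M
  l_add : ∀ a m₁ m₂, l a (m₁ + m₂) = l a m₁ + l a m₂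
  add_l : ∀ a₁ a₂ m, l (a₁ + a₂) m = l a₁ m + l a₂ m
  r_add : ∀ m₁ m₂ a, r (m₁ + m₂) a = r m₁ a + r m₂ a
  add_r : ∀ m a₁ a₂, r m (a₁ + a₂) = r m a₁ + r m a₂
  mul_l : ∀ a₁ a₂ m, l (a₁ * a₂) m = l a₁ (l a₂ m)
  r_mul : ∀ m a₁ a₂, r m (a₁ * a₂) = r (r m a₁) a₂
  l_r : ∀ a₁ m a₂, l a₁ (r m a₂) = r (l a₁ m) a₂

/-!
Put `d x = D x - D 1 • x`. Then `d` is a Jordan derivation, and `D` satisfies the claimed identity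
exactly when `d` is a derivation, so it suffices to show that Jordan derivations of `Mₙ(R)` into a
2-torsion free bimodule are derivations.

Since the bimodule need not be unital, `d` is first replaced by its corner `x ↦ 1 • d x • 1`,
which has the same derivation defect. Subtracting the inner derivations of `∑ₖ d(eₖₖ) eₖₖ` and
then of `∑ₖ d(eₖₒ) eₒₖ` does not change the defect either, and produces a Jordan derivation `g`
vanishing on every matrix unit `eᵢⱼ`. Peirce calculus with the `eᵢᵢ` then gives
`g (a eᵢⱼ) = eᵢₒ g (a eₒₒ) eₒⱼ`, and the Jordan identity for `a eₒₜ` and `b eₜₒ` with `t ≠ o` gives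
`g (ab eₒₒ) = g (a eₒₒ) b eₒₒ + a eₒₒ g (b eₒₒ)`. So `g` satisfies the Leibniz rule on pairs of
matrix units, hence everywhere by biadditivity.
-/

lemma eq_of_add_self_eq_add_self {M : Type*} [AddCommGroup M]
    (htf : ∀ m : M, m + m = 0 → m = 0) {m m' : M} (h : m + m = m' + m') : m = m' :=
  sub_eq_zero.mp <| htf _ <| by rw [sub_add_sub_comm, h, sub_self]

namespace RingBimod

variable {A M : Type*} [Ring A] [AddCommGroup M] (bm : RingBimod A M)

def lHom (a : A) : M →+ M := AddMonoidHom.mk' (bm.l a) (bm.l_add a)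

def rHom (a : A) : M →+ M := AddMonoidHom.mk' (bm.r · a) (bm.r_add · · a)

def lHom' (m : M) : A →+ M := AddMonoidHom.mk' (bm.l · m) (bm.add_l · · m)

def rHom' (m : M) : A →+ M := AddMonoidHom.mk' (bm.r m) (bm.add_r m)

@[simp] lemma l_zero (a : A) : bm.l a 0 = 0 := (bm.lHom a).map_zero

@[simp] lemma r_zero (a : A) : bm.r 0 a = 0 := (bm.rHom a).map_zero

@[simp] lemma zero_l (m : M) : bm.l 0 m = 0 := (bm.lHom' m).map_zero

@[simp] lemma zero_r (m : M) : bm.r m 0 = 0 := (bm.rHom' m).map_zero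

@[simp] lemma l_neg (a : A) (m : M) : bm.l a (-m) = -bm.l a m := (bm.lHom a).map_neg m

@[simp] lemma l_sub (a : A) (m m' : M) : bm.l a (m - m') = bm.l a m - bm.l a m' :=
  (bm.lHom a).map_sub m m'

@[simp] lemma r_sub (a : A) (m m' : M) : bm.r (m - m') a = bm.r m a - bm.r m' a :=
  (bm.rHom a).map_sub m m'

lemma l_sum {ι : Type*} (a : A) (s : Finset ι) (m : ι → M) :
    bm.l a (∑ i ∈ s, m i) = ∑ i ∈ s, bm.l a (m i) :=
  map_sum (bm.lHom a) m s

lemma r_sum {ι : Type*} (a : A) (s : Finset ι) (m : ι → M) :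
    bm.r (∑ i ∈ s, m i) a = ∑ i ∈ s, bm.r (m i) a :=
  map_sum (bm.rHom a) m s

lemma sum_r {ι : Type*} (m : M) (s : Finset ι) (a : ι → A) :
    bm.r m (∑ i ∈ s, a i) = ∑ i ∈ s, bm.r m (a i) :=
  map_sum (bm.rHom' m) a s

@[simp] lemma l_l (a b : A) (m : M) : bm.l a (bm.l b m) = bm.l (a * b) m := (bm.mul_l a b m).symm

@[simp] lemma r_r (m : M) (a b : A) : bm.r (bm.r m a) b = bm.r m (a * b) := (bm.r_mul m a b).symm

attribute [simp] l_add add_l r_add add_r l_r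

lemma r_l_eq_zero_of_eq_add {e : A} (he : e * e = e) {m : M}
    (h : m = bm.r m e + bm.l e m) : bm.r (bm.l e m) e = 0 := by
  have h' := congrArg (fun m => bm.r (bm.l e m) e) h
  simp only [l_add, r_add, l_r, l_l, r_r, he] at h'
  exact left_eq_add.mp h'

lemma eq_r_l_of_add_self_eq (htf : ∀ m : M, m + m = 0 → m = 0) {e : A} (he : e * e = e)
    {m : M} (h : m + m = bm.r m e + bm.l e m) : m = bm.r (bm.l e m) e := by
  have hl := congrArg (bm.l e) h
  have hr := congrArg (bm.r · e) h
  simp only [l_add, r_add, l_r, l_l, r_r, he] at hl hr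
  rw [add_right_cancel_iff.mp ((add_comm _ _).trans hl)] at h
  rw [add_left_cancel_iff.mp hr] at h
  exact eq_of_add_self_eq_add_self htf h

def derivDefect (f : A → M) (x y : A) : M := f (x * y) - bm.r (f x) y - bm.l x (f y)

def innerDeriv (w : M) (x : A) : M := bm.r w x - bm.l x w

/-- The `1 M 1`-component of `f`: the bimodule need not be unital, so in general
`bm.r (bm.l 1 m) 1 ≠ m`. -/
def corner (f : A → M) (x : A) : M := bm.r (bm.l 1 (f x)) 1

structure IsJordanDerivation (f : A → M) : Prop where
  map_add : ∀ x y, f (x + y) = f x + f y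
  map_jordan : ∀ x y,
    f (x * y + y * x) = bm.r (f x) y + bm.l x (f y) + bm.r (f y) x + bm.l y (f x)

lemma derivDefect_sub_innerDeriv (f : A → M) (w : M) :
    bm.derivDefect (f - bm.innerDeriv w) = bm.derivDefect f := by
  funext x y
  simp only [derivDefect, innerDeriv, Pi.sub_apply, l_sub, r_sub, l_r, l_l, r_r]
  abel

lemma derivDefect_add_left {f : A → M} (hadd : ∀ x y, f (x + y) = f x + f y) (x x' y : A) :
    bm.derivDefect f (x + x') y = bm.derivDefect f x y + bm.derivDefect f x' y := by
  simp only [derivDefect, add_mul, hadd, r_add, add_l]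
  abel

lemma derivDefect_add_right {f : A → M} (hadd : ∀ x y, f (x + y) = f x + f y) (x y y' : A) :
    bm.derivDefect f x (y + y') = bm.derivDefect f x y + bm.derivDefect f x y' := by
  simp only [derivDefect, mul_add, hadd, add_r, l_add]
  abel

lemma isJordanDerivation_sub_r_map_one {D : A → M} (hadd : ∀ x y, D (x + y) = D x + D y)
    (hJ : ∀ x y, D (x * y + y * x)
        = bm.r (D x) y + bm.l x (D y) + bm.r (D y) x + bm.l y (D x)
          - bm.l x (bm.r (D 1) y) - bm.l y (bm.r (D 1) x)) :
    bm.IsJordanDerivation (fun x => D x - bm.r (D 1) x) where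
  map_add x y := by
    simp only [hadd, add_r]
    abel
  map_jordan x y := by
    simp only [hJ, add_r, r_sub, l_sub, l_r, r_r]
    abel

lemma derivDefect_sub_r_map_one (D : A → M) (x y : A) :
    bm.derivDefect (fun x => D x - bm.r (D 1) x) x y
      = D (x * y) - bm.r (D x) y - bm.l x (D y) + bm.l x (bm.r (D 1) y) := by
  simp only [derivDefect, r_sub, l_sub, r_r, l_r]
  abel

namespace IsJordanDerivation

variable {bm} {f : A → M}

lemma map_zero (hf : bm.IsJordanDerivation f) : f 0 = 0 := by
  simpa using hf.map_add 0 0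

lemma map_mul_self (htf : ∀ m : M, m + m = 0 → m = 0) (hf : bm.IsJordanDerivation f) (x : A) :
    f (x * x) = bm.r (f x) x + bm.l x (f x) := by
  refine eq_of_add_self_eq_add_self htf ?_
  rw [← hf.map_add, hf.map_jordan]
  abel

lemma map_mul_mul_self (htf : ∀ m : M, m + m = 0 → m = 0) (hf : bm.IsJordanDerivation f)
    (x y : A) :
    f (x * y * x) = bm.r (f x) (y * x) + bm.r (bm.l x (f y)) x + bm.l (x * y) (f x) := by
  have h := hf.map_jordan x (x * y + y * x)
  rw [show x * (x * y + y * x) + (x * y + y * x) * x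
      = (x * x * y + y * (x * x)) + (x * y * x + x * y * x) by noncomm_ring,
    hf.map_add, hf.map_jordan (x * x) y, hf.map_add, hf.map_jordan x y,
    hf.map_mul_self htf x] at h
  refine eq_of_add_self_eq_add_self htf ?_
  rw [eq_sub_of_add_eq' h]
  simp only [l_add, add_l, r_add, add_r, l_r, l_l, r_r]
  abel

lemma map_mul_mul_add_mul_mul (htf : ∀ m : M, m + m = 0 → m = 0)
    (hf : bm.IsJordanDerivation f) (x y z : A) :
    f (x * y * z + z * y * x) = bm.r (f x) (y * z) + bm.r (bm.l x (f y)) z + bm.l (x * y) (f z)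
      + bm.r (f z) (y * x) + bm.r (bm.l z (f y)) x + bm.l (z * y) (f x) := by
  have h := hf.map_mul_mul_self htf (x + z) y
  rw [show (x + z) * y * (x + z) = (x * y * x + z * y * z) + (x * y * z + z * y * x) by
      noncomm_ring,
    hf.map_add, hf.map_add, hf.map_mul_mul_self htf x y, hf.map_mul_mul_self htf z y] at h
  rw [eq_sub_of_add_eq' h]
  simp only [hf.map_add, mul_add, add_mul, l_add, add_l, r_add, add_r]
  abel

lemma sub_innerDeriv (hf : bm.IsJordanDerivation f) (w : M) :
    bm.IsJordanDerivation (f - bm.innerDeriv w) where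
  map_add x y := by
    simp only [Pi.sub_apply, innerDeriv, hf.map_add, add_r, add_l]
    abel
  map_jordan x y := by
    simp only [Pi.sub_apply, innerDeriv, hf.map_jordan, add_r, add_l, l_sub, r_sub, l_r, l_l, r_r]
    abel

lemma corner (hf : bm.IsJordanDerivation f) : bm.IsJordanDerivation (bm.corner f) where
  map_add x y := by simp only [RingBimod.corner, hf.map_add, l_add, r_add]
  map_jordan x y := by
    simp only [RingBimod.corner, hf.map_jordan, l_add, r_add, l_r, l_l, r_r, one_mul, mul_one]

/-- `f` differs from its corner by `x ↦ x • f 1 + f 1 • x`, whose derivation defect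
`-2 • x • f 1 • y` vanishes. -/
lemma derivDefect_corner (htf : ∀ m : M, m + m = 0 → m = 0) (hf : bm.IsJordanDerivation f) :
    bm.derivDefect (bm.corner f) = bm.derivDefect f := by
  have h1 : f 1 = bm.r (f 1) 1 + bm.l 1 (f 1) := by simpa using hf.map_mul_self htf 1
  have hl : ∀ x y, bm.r (bm.l x (f 1)) y = 0 := fun x y => by
    have h := congrArg (bm.l x) h1
    simp only [l_add, l_r, l_l, mul_one] at h
    rw [← one_mul y, ← r_r, right_eq_add.mp h, r_zero]
  have hr : ∀ x, bm.r (bm.l 1 (f 1)) x = 0 := fun x => by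
    have h := congrArg (bm.r · x) h1
    simp only [r_add, r_r, one_mul] at h
    exact left_eq_add.mp h
  have hU : ∀ x, f x + f x = bm.r (f x) 1 + bm.l x (f 1) + bm.r (f 1) x + bm.l 1 (f x) :=
    fun x => by rw [← hf.map_add, ← hf.map_jordan, mul_one, one_mul]
  have hdecomp : ∀ x, f x = bm.corner f x + bm.l x (f 1) + bm.r (f 1) x := fun x => by
    have hlU := congrArg (bm.l 1) (hU x)
    have hrU := congrArg (bm.r · 1) (hU x)
    simp only [l_add, r_add, l_r, l_l, r_r, one_mul, mul_one, hr, hl] at hlU hrU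
    refine eq_of_add_self_eq_add_self htf ?_
    linear_combination (norm := (simp only [RingBimod.corner]; abel)) hU x + hlU + hrU
  funext x y
  simp only [derivDefect]
  rw [hdecomp (x * y), hdecomp x, hdecomp y]
  simp only [RingBimod.corner, l_add, r_add, l_r, l_l, r_r, one_mul, mul_one, hl]
  abel

end IsJordanDerivation

end RingBimod

namespace RingBimod

open Matrix

variable {ι R M : Type*} [Fintype ι] [DecidableEq ι] [Ring R] [AddCommGroup M]
  {bm : RingBimod (Matrix ι ι R) M} {f : Matrix ι ι R → M}

lemma derivDefect_eq_zero_of_single (hadd : ∀ x y, f (x + y) = f x + f y)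
    (h : ∀ i j k l (a b : R), bm.derivDefect f (single i j a) (single k l b) = 0)
    (x y : Matrix ι ι R) : bm.derivDefect f x y = 0 := by
  have hf0 : f 0 = 0 := by simpa using hadd 0 0
  induction x using Matrix.induction_on' with
  | h_zero => simp [derivDefect, hf0]
  | h_add p q hp hq => rw [bm.derivDefect_add_left hadd, hp, hq, add_zero]
  | h_std_basis i j a =>
    induction y using Matrix.induction_on' with
    | h_zero => simp [derivDefect, hf0]
    | h_add p q hp hq => rw [bm.derivDefect_add_right hadd, hp, hq, add_zero]
    | h_std_basis k l b => exact h i j k l a b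

namespace IsJordanDerivation

lemma map_single_diag_eq_innerDeriv (htf : ∀ m : M, m + m = 0 → m = 0)
    (hf : bm.IsJordanDerivation f) (hr : ∀ x, bm.r (f x) 1 = f x) (p : ι) :
    f (single p p 1)
      = bm.innerDeriv (∑ k, bm.r (f (single k k 1)) (single k k 1)) (single p p 1) := by
  set e : ι → Matrix ι ι R := fun k => single k k 1
  have he : ∀ k, e k * e k = e k := by simp [e]
  have hne : ∀ k l, k ≠ l → e k * e l = 0 := fun k l h => single_mul_single_of_ne _ _ _ _ h _
  have hterm : ∀ k, bm.r (f (e p)) (e k) + bm.r (bm.l (e p) (f (e k))) (e k)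
      = if k = p then bm.r (f (e p)) (e p) else 0 := by
    intro k
    split_ifs with hkp
    · subst hkp
      have h := hf.map_mul_self htf (e k)
      rw [he] at h
      rw [r_l_eq_zero_of_eq_add bm (he k) h, add_zero]
    · have h := congrArg (bm.r · (e k)) (hf.map_jordan (e p) (e k))
      have h2 := hf.map_mul_mul_self htf (e k) (e p)
      simp only [hne p k (Ne.symm hkp), hne k p hkp, add_zero, hf.map_zero, r_add, r_r, he,
        zero_r, r_zero, zero_mul, zero_l, zero_add] at h h2
      rw [← h2, add_zero] at h
      exact h.symm
  have hsum := Finset.sum_congr rfl (fun k (_ : k ∈ Finset.univ) => hterm k)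
  rw [Finset.sum_add_distrib, ← sum_r, sum_single_one, hr, Finset.sum_ite_eq',
    if_pos (Finset.mem_univ p)] at hsum
  have hdiag : ∑ k, bm.r (f (e k)) (e k * e p) = bm.r (f (e p)) (e p) := by
    rw [Finset.sum_eq_single p (fun k _ hkp => by rw [hne k p hkp, zero_r]) (by simp), he]
  change f (e p) = bm.innerDeriv (∑ k, bm.r (f (e k)) (e k)) (e p)
  simp only [innerDeriv, r_sum, l_sum, r_r, l_r, hdiag]
  linear_combination (norm := abel) hsum

lemma map_single_one_eq_sandwich (htf : ∀ m : M, m + m = 0 → m = 0)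
    (hf : bm.IsJordanDerivation f) (hdiag : ∀ p, f (single p p 1) = 0) (p q : ι) :
    f (single p q 1) = bm.r (bm.l (single p p 1) (f (single p q 1))) (single q q 1) := by
  rcases eq_or_ne p q with rfl | hpq
  · simp [hdiag]
  have hsq : bm.r (f (single p q 1)) (single p q 1) + bm.l (single p q 1) (f (single p q 1))
      = 0 := by
    rw [← hf.map_mul_self htf, single_mul_single_of_ne _ _ _ _ hpq.symm, hf.map_zero]
  have hqp : bm.r (bm.l (single q q 1) (f (single p q 1))) (single p p 1) = 0 := by
    have h := congrArg (fun m => bm.l (single q q 1) (bm.r m (single q p 1))) hsq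
    simpa [single_mul_single_of_ne _ _ _ _ hpq.symm] using h
  have h := hf.map_mul_mul_add_mul_mul htf (single p p 1) (single p q 1) (single q q 1)
  simpa [hdiag, single_mul_single_of_ne _ _ _ _ hpq.symm, hqp] using h

lemma l_single_map_single_one_of_ne (htf : ∀ m : M, m + m = 0 → m = 0)
    (hf : bm.IsJordanDerivation f) (hdiag : ∀ p, f (single p p 1) = 0) (i : ι) {j k : ι}
    (hjk : j ≠ k) (l : ι) : bm.l (single i j 1) (f (single k l 1)) = 0 := by
  rw [hf.map_single_one_eq_sandwich htf hdiag, l_r, l_l, single_mul_single_of_ne _ _ _ _ hjk,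
    zero_l, r_zero]

lemma r_map_single_one_single_of_ne (htf : ∀ m : M, m + m = 0 → m = 0)
    (hf : bm.IsJordanDerivation f) (hdiag : ∀ p, f (single p p 1) = 0) (k : ι) {l i : ι}
    (hli : l ≠ i) (j : ι) : bm.r (f (single k l 1)) (single i j 1) = 0 := by
  rw [hf.map_single_one_eq_sandwich htf hdiag, r_r, single_mul_single_of_ne _ _ _ _ hli, zero_r]

lemma l_single_map_single_one_self (htf : ∀ m : M, m + m = 0 → m = 0)
    (hf : bm.IsJordanDerivation f) (hdiag : ∀ p, f (single p p 1) = 0) (k l : ι) :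
    bm.l (single k k 1) (f (single k l 1)) = f (single k l 1) := by
  nth_rewrite 1 [hf.map_single_one_eq_sandwich htf hdiag]
  rw [l_r, l_l, single_mul_single_same, mul_one, ← hf.map_single_one_eq_sandwich htf hdiag]

lemma r_map_single_one_single_self (htf : ∀ m : M, m + m = 0 → m = 0)
    (hf : bm.IsJordanDerivation f) (hdiag : ∀ p, f (single p p 1) = 0) (k l : ι) :
    bm.r (f (single k l 1)) (single l l 1) = f (single k l 1) := by
  nth_rewrite 1 [hf.map_single_one_eq_sandwich htf hdiag]
  rw [r_r, single_mul_single_same, mul_one, ← hf.map_single_one_eq_sandwich htf hdiag]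

lemma map_single_one_eq_neg_sandwich (htf : ∀ m : M, m + m = 0 → m = 0)
    (hf : bm.IsJordanDerivation f) (hdiag : ∀ p, f (single p p 1) = 0) {o q : ι} (hqo : q ≠ o) :
    f (single o q 1) = -bm.r (bm.l (single o q 1) (f (single q o 1))) (single o q 1) := by
  have h := congrArg (bm.l (single o q 1)) (hf.map_jordan (single q o 1) (single o q 1))
  simp only [single_mul_single_same, mul_one, hf.map_add, hdiag, add_zero, l_zero, l_add, l_r, l_l,
    hf.l_single_map_single_one_self htf hdiag, hf.l_single_map_single_one_of_ne htf hdiag _ hqo,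
    r_zero, single_mul_single_of_ne _ _ _ _ hqo, zero_l] at h
  exact eq_neg_of_add_eq_zero_right h.symm

lemma map_single_one_eq_innerDeriv (htf : ∀ m : M, m + m = 0 → m = 0)
    (hf : bm.IsJordanDerivation f) (hdiag : ∀ p, f (single p p 1) = 0) (o p q : ι) :
    f (single p q 1)
      = bm.innerDeriv (∑ k, bm.r (f (single k o 1)) (single o k 1)) (single p q 1) := by
  have hr : bm.r (∑ k, bm.r (f (single k o 1)) (single o k 1)) (single p q 1)
      = bm.r (f (single p o 1)) (single o q 1) := by
    rw [r_sum, Finset.sum_eq_single p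
      (fun k _ hkp => by rw [r_r, single_mul_single_of_ne _ _ _ _ hkp, zero_r]) (by simp)]
    simp
  have hl : bm.l (single p q 1) (∑ k, bm.r (f (single k o 1)) (single o k 1))
      = bm.r (bm.l (single p q 1) (f (single q o 1))) (single o q 1) := by
    rw [l_sum, Finset.sum_eq_single q (fun k _ hkq => by
      rw [l_r, hf.l_single_map_single_one_of_ne htf hdiag _ hkq.symm, r_zero]) (by simp), l_r]
  rw [innerDeriv, hr, hl]
  rcases eq_or_ne q o with rfl | hqo
  · rw [hdiag, l_zero, r_zero, sub_zero, hf.r_map_single_one_single_self htf hdiag]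
  have h := hf.map_mul_mul_add_mul_mul htf (single p o 1) (single o o 1) (single o q 1)
  simp only [single_mul_single_same, mul_one, single_mul_single_of_ne _ _ _ _ hqo, zero_mul,
    add_zero, hdiag, l_zero, r_zero, zero_l] at h
  rwa [← r_r, hf.r_map_single_one_single_of_ne htf hdiag _ hqo, r_zero, add_zero,
    hf.map_single_one_eq_neg_sandwich htf hdiag hqo, l_neg, l_r, l_l, single_mul_single_same,
    mul_one, ← sub_eq_add_neg] at h

lemma map_single_diag_eq_sandwich (htf : ∀ m : M, m + m = 0 → m = 0)
    (hf : bm.IsJordanDerivation f) {o : ι} (ho : f (single o o 1) = 0) (a : R) :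
    f (single o o a) = bm.r (bm.l (single o o 1) (f (single o o a))) (single o o 1) := by
  refine eq_r_l_of_add_self_eq bm htf (by simp) ?_
  have h := hf.map_jordan (single o o a) (single o o 1)
  rwa [single_mul_single_same, single_mul_single_same, mul_one, one_mul, hf.map_add, ho, l_zero,
    r_zero, add_zero, add_zero] at h

lemma map_single_eq (htf : ∀ m : M, m + m = 0 → m = 0)
    (hf : bm.IsJordanDerivation f) (hz : ∀ p q, f (single p q 1) = 0) (o i j : ι) (a : R) :
    f (single i j a) = bm.r (bm.l (single i o 1) (f (single o o a))) (single o j 1) := by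
  by_cases hij : i = o ∧ j = o
  · obtain ⟨rfl, rfl⟩ := hij
    exact hf.map_single_diag_eq_sandwich htf (hz _ _) a
  have h := hf.map_mul_mul_add_mul_mul htf (single i o 1) (single o o a) (single o j 1)
  rw [hf.map_single_diag_eq_sandwich htf (hz o o) a] at h
  rcases not_and_or.mp hij with hio | hjo
  · simpa [hz, mul_assoc, single_mul_single_of_ne _ _ _ _ (Ne.symm hio)] using h
  · simpa [hz, single_mul_single_of_ne _ _ _ _ hjo] using h

lemma map_single_diag_mul (htf : ∀ m : M, m + m = 0 → m = 0)
    (hf : bm.IsJordanDerivation f) (hz : ∀ p q, f (single p q 1) = 0) {o t : ι} (hot : o ≠ t)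
    (a b : R) :
    f (single o o (a * b)) = bm.r (bm.l (single o o 1) (f (single o o a))) (single o o b)
      + bm.r (bm.l (single o o a) (f (single o o b))) (single o o 1) := by
  have h := congrArg (fun m => bm.r (bm.l (single o o 1) m) (single o o 1))
    (hf.map_jordan (single o t a) (single t o b))
  simp only [single_mul_single_same, hf.map_add] at h
  rw [hf.map_single_eq htf hz o o t a, hf.map_single_eq htf hz o t o b,
    hf.map_single_eq htf hz o t t (b * a)] at h
  simp only [l_add, l_r, l_l, single_mul_single_of_ne _ _ _ _ hot, zero_l, r_zero, add_zero, r_r,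
    single_mul_single_same, one_mul, mul_one, r_add] at h
  rwa [← hf.map_single_diag_eq_sandwich htf (hz o o)] at h

lemma derivDefect_single_single (htf : ∀ m : M, m + m = 0 → m = 0)
    (hf : bm.IsJordanDerivation f) (hz : ∀ p q, f (single p q 1) = 0) {o t : ι} (hot : o ≠ t)
    (i j k l : ι) (a b : R) :
    bm.derivDefect f (single i j a) (single k l b) = 0 := by
  rw [derivDefect, hf.map_single_eq htf hz o i j a, hf.map_single_eq htf hz o k l b]
  rcases eq_or_ne j k with rfl | hjk
  · rw [single_mul_single_same, hf.map_single_eq htf hz o i l (a * b),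
      hf.map_single_diag_mul htf hz hot]
    simp
  · rw [single_mul_single_of_ne _ _ _ _ hjk, hf.map_zero]
    simp [single_mul_single_of_ne _ _ _ _ hjk]

lemma derivDefect_eq_zero [Nontrivial ι] (htf : ∀ m : M, m + m = 0 → m = 0)
    (hf : bm.IsJordanDerivation f) (x y : Matrix ι ι R) : bm.derivDefect f x y = 0 := by
  obtain ⟨o, t, hot⟩ := exists_pair_ne ι
  have hP := hf.corner
  set m₁ := ∑ k, bm.r (bm.corner f (single k k 1)) (single k k 1)
  have hdiag : ∀ p, (bm.corner f - bm.innerDeriv m₁) (single p p 1) = 0 := fun p =>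
    sub_eq_zero.mpr <|
      hP.map_single_diag_eq_innerDeriv htf (fun x => by rw [RingBimod.corner, r_r, mul_one]) p
  have hP₁ := hP.sub_innerDeriv m₁
  set m₂ := ∑ k, bm.r ((bm.corner f - bm.innerDeriv m₁) (single k o 1)) (single o k 1)
  have hz : ∀ p q, (bm.corner f - bm.innerDeriv m₁ - bm.innerDeriv m₂) (single p q 1) = 0 :=
    fun p q => sub_eq_zero.mpr <| hP₁.map_single_one_eq_innerDeriv htf hdiag o p q
  rw [← hf.derivDefect_corner htf, ← derivDefect_sub_innerDeriv _ _ m₁,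
    ← derivDefect_sub_innerDeriv _ _ m₂]
  exact derivDefect_eq_zero_of_single (hP₁.sub_innerDeriv m₂).map_add
    ((hP₁.sub_innerDeriv m₂).derivDefect_single_single htf hz hot) x y

end IsJordanDerivation

end RingBimod

theorem stmt12 (R : Type*) [Ring R] (n : ℕ) (hn : 2 ≤ n)
    (M : Type*) [AddCommGroup M] (bm : RingBimod (Matrix (Fin n) (Fin n) R) M)
    (htf : ∀ m : M, m + m = 0 → m = 0)
    (D : Matrix (Fin n) (Fin n) R → M)
    (hadd : ∀ A B, D (A + B) = D A + D B)
    (hJ : ∀ A B, D (A * B + B * A)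
        = bm.r (D A) B + bm.l A (D B) + bm.r (D B) A + bm.l B (D A)
          - bm.l A (bm.r (D 1) B) - bm.l B (bm.r (D 1) A)) :
    ∀ A B, D (A * B) = bm.r (D A) B + bm.l A (D B) - bm.l A (bm.r (D 1) B) := by
  have : Nontrivial (Fin n) := Fin.nontrivial_iff_two_le.mpr hn
  intro A B
  have h := (bm.isJordanDerivation_sub_r_map_one hadd hJ).derivDefect_eq_zero htf A B
  rw [RingBimod.derivDefect_sub_r_map_one] at h
  rw [← sub_eq_zero, ← h]
  abel
end

section
/- Let A be a 2-torsion free unital ring such that every additive map D : A → A satisfying (ab = ba = 0 implies D(a)b + aD(b) + D(b)a + bD(a) = 0) is a generalized derivation with D(1) central. If φ : A → A is an additive map with φ(ab + ba) = aφ(b) + φ(b)a for all a, b ∈ A, then φ(a) = aφ(1) for all a ∈ A and φ(1) is central in A. -/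
theorem stmt14 (A : Type*) [Ring A] (htf : ∀ a : A, a + a = 0 → a = 0)
    (h : ∀ D : A → A, (∀ a b, D (a + b) = D a + D b) →
      (∀ a b, a * b = 0 → b * a = 0 → D a * b + a * D b + D b * a + b * D a = 0) →
      (∀ a b, D (a * b) = D a * b + a * D b - a * D 1 * b) ∧
        (∀ a : A, a * D 1 = D 1 * a))
    (φ : A → A) (hadd : ∀ a b, φ (a + b) = φ a + φ b)
    (hφ : ∀ a b, φ (a * b + b * a) = a * φ b + φ b * a) :
    (∀ a, φ a = a * φ 1) ∧ (∀ a : A, a * φ 1 = φ 1 * a) := by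
  have h0 : φ 0 = 0 := by
    have := hadd 0 0
    rw [add_zero] at this
    exact (left_eq_add.mp this)
  obtain ⟨hgd, hc⟩ := h φ hadd (by
    intro a b hab hba
    have h1 := hφ a b
    have h2 := hφ b a
    rw [hab, hba, add_zero, h0] at h1
    rw [hab, hba, add_zero, h0] at h2
    calc φ a * b + a * φ b + φ b * a + b * φ a
        = (a * φ b + φ b * a) + (b * φ a + φ a * b) := by abel
      _ = 0 := by rw [← h1, ← h2]; simp)
  have key : ∀ a, φ a + φ a = a * φ 1 + a * φ 1 := by
    intro a
    have := hφ a 1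
    rw [mul_one, one_mul, hadd, ← hc a] at this
    exact this
  refine ⟨fun a => ?_, hc⟩
  have h2 : φ a - a * φ 1 + (φ a - a * φ 1) = 0 := by
    rw [sub_add_sub_comm, key a, sub_self]
  exact sub_eq_zero.mp (htf _ h2)
end

section
/- Let R be a 2-torsion free unital ring, n ≥ 2, and φ : Mₙ(R) → Mₙ(R) an additive map satisfying φ(AB + BA) = Aφ(B) + φ(B)A for all A, B ∈ Mₙ(R). Then φ(A) = A·φ(1) for all A ∈ Mₙ(R), and φ(1) lies in the centre of Mₙ(R). -/
/-!
Putting `B = 1` in `φ(AB + BA) = Aφ(B) + φ(B)A` gives `2φ(A) = Ac + cA` with `c = φ(1)`.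
The left-hand side of the identity is symmetric in `A` and `B`, hence so is the right:
`Aφ(B) + φ(B)A = Bφ(A) + φ(A)B`; doubling it and substituting `2φ` shows that `c` commutes
with every commutator `AB - BA`. In `Mₙ(R)` with `n ≥ 2` every matrix unit `E_ij r` with
`i ≠ j` is a commutator and `E_ii r = E_ik r * E_ki 1`, so `c` is central, and then
`2φ(A) = 2Ac` yields `φ(A) = Ac` by 2-torsion freeness.
-/

namespace Matrix

theorem eq_zero_of_add_self_eq_zero {m n R : Type*} [AddZeroClass R]
    (htf : ∀ r : R, r + r = 0 → r = 0) {M : Matrix m n R} (h : M + M = 0) : M = 0 :=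
  Matrix.ext fun i j => htf _ (congrFun (congrFun h i) j)

variable {ι R : Type*} [Fintype ι] [DecidableEq ι] [Ring R]

theorem single_eq_commutator_of_ne {i j : ι} (hij : i ≠ j) (r : R) :
    single i j r = single i j r * single j j 1 - single j j 1 * single i j r := by
  rw [single_mul_single_same, single_mul_single_of_ne (h := hij.symm), mul_one, sub_zero]

theorem single_eq_single_mul_single (i k : ι) (r : R) :
    single i i r = single i k r * single k i 1 := by
  rw [single_mul_single_same, mul_one]

theorem commute_of_forall_commute_commutator [Nontrivial ι] {c : Matrix ι ι R}
    (hc : ∀ A B, Commute c (A * B - B * A)) (A : Matrix ι ι R) : Commute c A := by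
  have hoff : ∀ i j, i ≠ j → ∀ r, Commute c (single i j r) := fun i j hij r => by
    rw [single_eq_commutator_of_ne hij]
    exact hc _ _
  have hsingle : ∀ i j r, Commute c (single i j r) := by
    intro i j r
    obtain rfl | hij := eq_or_ne i j
    · obtain ⟨k, hk⟩ := exists_ne i
      rw [single_eq_single_mul_single i k]
      exact (hoff _ _ hk.symm r).mul_right (hoff _ _ hk 1)
    · exact hoff i j hij r
  rw [matrix_eq_sum_single A]
  exact Commute.sum_right _ _ _ fun i _ => Commute.sum_right _ _ _ fun j _ => hsingle i j (A i j)

end Matrix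

section JordanIdentity

variable {S : Type*} [Ring S] {φ : S → S}
  (hφ : ∀ A B, φ (A * B + B * A) = A * φ B + φ B * A)
include hφ

theorem map_add_self_eq (hadd : ∀ A B, φ (A + B) = φ A + φ B) (A : S) :
    φ A + φ A = A * φ 1 + φ 1 * A := by
  simpa only [mul_one, one_mul, hadd] using hφ A 1

theorem mul_map_add_map_mul_comm (A B : S) :
    A * φ B + φ B * A = B * φ A + φ A * B := by
  rw [← hφ, ← hφ, add_comm]

theorem commute_map_one_commutator (hadd : ∀ A B, φ (A + B) = φ A + φ B) (A B : S) :
    Commute (φ 1) (A * B - B * A) := by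
  have hdouble : A * (φ B + φ B) + (φ B + φ B) * A = B * (φ A + φ A) + (φ A + φ A) * B := by
    linear_combination (norm := noncomm_ring) 2 * mul_map_add_map_mul_comm hφ A B
  rw [map_add_self_eq hφ hadd, map_add_self_eq hφ hadd] at hdouble
  show φ 1 * (A * B - B * A) = (A * B - B * A) * φ 1
  linear_combination (norm := noncomm_ring) -hdouble

theorem map_eq_mul_map_one (htf : ∀ s : S, s + s = 0 → s = 0)
    (hadd : ∀ A B, φ (A + B) = φ A + φ B) (hcentral : ∀ A, Commute (φ 1) A) (A : S) :
    φ A = A * φ 1 := by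
  have htwice := map_add_self_eq hφ hadd A
  rw [(hcentral A).eq] at htwice
  rw [← sub_eq_zero]
  exact htf _ (by linear_combination (norm := noncomm_ring) htwice)

end JordanIdentity

theorem stmt15 (R : Type*) [Ring R] (htf : ∀ r : R, r + r = 0 → r = 0)
    (n : ℕ) (hn : 2 ≤ n)
    (φ : Matrix (Fin n) (Fin n) R → Matrix (Fin n) (Fin n) R)
    (hadd : ∀ A B, φ (A + B) = φ A + φ B)
    (hφ : ∀ A B, φ (A * B + B * A) = A * φ B + φ B * A) :
    (∀ A, φ A = A * φ 1) ∧ (∀ A, A * φ 1 = φ 1 * A) := by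
  have : Nontrivial (Fin n) := Fin.nontrivial_iff_two_le.mpr hn
  have hcentral : ∀ A, Commute (φ 1) A :=
    Matrix.commute_of_forall_commute_commutator (commute_map_one_commutator hφ hadd)
  exact ⟨map_eq_mul_map_one hφ (fun _ => Matrix.eq_zero_of_add_self_eq_zero htf) hadd hcentral,
    fun A => (hcentral A).symm.eq⟩
end

section
/- Let A be a 2-torsion free unital ring such that every additive map D : A → A satisfying (ab = ba = 0 implies D(a)b + aD(b) + D(b)a + bD(a) = 0) is a generalized derivation with D(1) central. Then every Jordan derivation of the trivial extension T(A, A) is a derivation. -/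
open TrivSqZeroExt
theorem stmt16 (A : Type*) [Ring A] (htf : ∀ a : A, a + a = 0 → a = 0)
    (h : ∀ D : A → A, (∀ a b, D (a + b) = D a + D b) →
      (∀ a b, a * b = 0 → b * a = 0 → D a * b + a * D b + D b * a + b * D a = 0) →
      (∀ a b, D (a * b) = D a * b + a * D b - a * D 1 * b) ∧
        (∀ a : A, a * D 1 = D 1 * a)) :
    ∀ Δ : TrivSqZeroExt A A → TrivSqZeroExt A A,
      (∀ x y, Δ (x + y) = Δ x + Δ y) →
      (∀ x y, Δ (x * y + y * x) = Δ x * y + x * Δ y + Δ y * x + y * Δ x) →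
      ∀ x y, Δ (x * y) = Δ x * y + x * Δ y := by
  intro Δ hadd hJ
  have h0 : Δ 0 = 0 := by
    have h1 := hadd 0 0
    rw [add_zero] at h1
    exact (left_eq_add.mp h1)
  set P : A → A := fun a => (Δ (inl a)).fst with hPdef
  set Q : A → A := fun m => (Δ (inr m)).fst with hQdef
  set R : A → A := fun a => (Δ (inl a)).snd with hRdef
  set S : A → A := fun m => (Δ (inr m)).snd with hSdef
  have Padd : ∀ a b : A, P (a + b) = P a + P b := by
    intro a b
    simp only [hPdef]
    rw [show (inl (a + b) : TrivSqZeroExt A A) = inl a + inl b by rw [inl_add], hadd,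
      TrivSqZeroExt.fst_add]
  have Radd : ∀ a b : A, R (a + b) = R a + R b := by
    intro a b
    simp only [hRdef]
    rw [show (inl (a + b) : TrivSqZeroExt A A) = inl a + inl b by rw [inl_add], hadd,
      TrivSqZeroExt.snd_add]
  have Sadd : ∀ a b : A, S (a + b) = S a + S b := by
    intro a b
    simp only [hSdef]
    rw [show (inr (a + b) : TrivSqZeroExt A A) = inr a + inr b by rw [inr_add], hadd,
      TrivSqZeroExt.snd_add]
  have P0 : P 0 = 0 := by simp only [hPdef]; rw [inl_zero, h0]; rfl
  have R0 : R 0 = 0 := by simp only [hRdef]; rw [inl_zero, h0]; rfl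
  have S0 : S 0 = 0 := by simp only [hSdef]; rw [inr_zero, h0]; rfl
  -- key identity for Q
  have hQkey : ∀ m n : A, Q m * n + m * Q n + Q n * m + n * Q m = 0 := by
    intro m n
    have hj := hJ (inr m) (inr n)
    rw [inr_mul_inr, inr_mul_inr, add_zero, h0] at hj
    have := congrArg TrivSqZeroExt.snd hj.symm
    simpa [hQdef, hSdef, smul_eq_mul, op_smul_eq_mul, add_assoc] using this
  have hQ1 : Q 1 = 0 := by
    have h4 := hQkey 1 1
    simp only [mul_one, one_mul] at h4
    refine htf _ (htf _ ?_)
    rw [← h4]; abel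
  have hQzero : ∀ m, Q m = 0 := by
    intro m
    have hk := hQkey m 1
    simp only [mul_one, one_mul, hQ1, zero_mul, mul_zero, add_zero, zero_add] at hk
    exact htf _ hk
  -- Jordan identities for P, R, S
  have PJordan : ∀ a b : A, P (a * b + b * a) = P a * b + a * P b + P b * a + b * P a := by
    intro a b
    have hj := hJ (inl a) (inl b)
    rw [inl_mul_inl, inl_mul_inl, ← inl_add] at hj
    have := congrArg TrivSqZeroExt.fst hj
    simpa [hPdef, smul_eq_mul, op_smul_eq_mul] using this
  have RJordan : ∀ a b : A, R (a * b + b * a) = R a * b + a * R b + R b * a + b * R a := by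
    intro a b
    have hj := hJ (inl a) (inl b)
    rw [inl_mul_inl, inl_mul_inl, ← inl_add] at hj
    have := congrArg TrivSqZeroExt.snd hj
    simpa [hRdef, hPdef, smul_eq_mul, op_smul_eq_mul] using this
  have SJordan : ∀ a n : A, S (a * n + n * a) = P a * n + a * S n + S n * a + n * P a := by
    intro a n
    have hj := hJ (inl a) (inr n)
    rw [inl_mul_inr, inr_mul_inl, ← inr_add] at hj
    have := congrArg TrivSqZeroExt.snd hj
    simpa [hSdef, hPdef, hRdef, smul_eq_mul, op_smul_eq_mul, add_assoc] using this
  -- P is a derivation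
  have hPcond : ∀ a b : A, a * b = 0 → b * a = 0 →
      P a * b + a * P b + P b * a + b * P a = 0 := by
    intro a b h1 h2
    rw [← PJordan, h1, h2, add_zero, P0]
  obtain ⟨hPgen, hP1c⟩ := h P Padd hPcond
  have hP1 : P 1 = 0 := by
    have hj := PJordan 1 1
    simp only [mul_one, one_mul] at hj
    rw [Padd] at hj
    refine htf _ ?_
    have h3 : P 1 + P 1 + P 1 + P 1 - (P 1 + P 1) = P 1 + P 1 := by abel
    rw [← hj, sub_self] at h3
    exact h3.symm
  have hPder : ∀ a b : A, P (a * b) = P a * b + a * P b := by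
    intro a b
    rw [hPgen a b, hP1, mul_zero, zero_mul, sub_zero]
  -- R is a derivation
  have hRcond : ∀ a b : A, a * b = 0 → b * a = 0 →
      R a * b + a * R b + R b * a + b * R a = 0 := by
    intro a b h1 h2
    rw [← RJordan, h1, h2, add_zero, R0]
  obtain ⟨hRgen, hR1c⟩ := h R Radd hRcond
  have hR1 : R 1 = 0 := by
    have hj := RJordan 1 1
    simp only [mul_one, one_mul] at hj
    rw [Radd] at hj
    refine htf _ ?_
    have h3 : R 1 + R 1 + R 1 + R 1 - (R 1 + R 1) = R 1 + R 1 := by abel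
    rw [← hj, sub_self] at h3
    exact h3.symm
  have hRder : ∀ a b : A, R (a * b) = R a * b + a * R b := by
    intro a b
    rw [hRgen a b, hR1, mul_zero, zero_mul, sub_zero]
  -- D := S - P
  set D : A → A := fun a => S a - P a with hDdef
  have Dadd : ∀ a b : A, D (a + b) = D a + D b := by
    intro a b
    simp only [hDdef, Sadd, Padd]; abel
  have DJordan : ∀ a b : A, D (a * b + b * a) = a * D b + D b * a := by
    intro a b
    simp only [hDdef, SJordan, PJordan]
    noncomm_ring
  have hDcond : ∀ a b : A, a * b = 0 → b * a = 0 →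
      D a * b + a * D b + D b * a + b * D a = 0 := by
    intro a b h1 h2
    have e1 : a * D b + D b * a = 0 := by
      rw [← DJordan a b, h1, h2, add_zero]
      simp only [hDdef, S0, P0, sub_zero]
    have e2 : b * D a + D a * b = 0 := by
      rw [← DJordan b a, h1, h2, add_zero]
      simp only [hDdef, S0, P0, sub_zero]
    rw [show D a * b + a * D b + D b * a + b * D a
        = (a * D b + D b * a) + (b * D a + D a * b) from by abel, e1, e2, add_zero]
  obtain ⟨hDgen, hD1c⟩ := h D Dadd hDcond
  have hDlin : ∀ a : A, D a = D 1 * a := by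
    intro a
    have hj := DJordan a 1
    simp only [mul_one, one_mul] at hj
    rw [Dadd, hD1c a] at hj
    have h5 : (D a - D 1 * a) + (D a - D 1 * a) = (D a + D a) - (D 1 * a + D 1 * a) := by
      abel
    rw [hj, sub_self] at h5
    exact sub_eq_zero.mp (htf _ h5)
  have hSval : ∀ a : A, S a = P a + D 1 * a := by
    intro a
    have := hDlin a
    simp only [hDdef] at this
    rw [← this]; abel
  have hc : ∀ a n : A, a * (D 1 * n) = D 1 * (a * n) := by
    intro a n
    rw [← mul_assoc, hD1c a, mul_assoc]
  -- value of Δ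
  have hΔfst : ∀ z : TrivSqZeroExt A A, (Δ z).fst = P z.fst := by
    intro z
    conv_lhs => rw [← inl_fst_add_inr_snd_eq z]
    rw [hadd, TrivSqZeroExt.fst_add]
    have hq : (Δ (inr z.snd)).fst = Q z.snd := rfl
    rw [hq, hQzero, add_zero]
  have hΔsnd : ∀ z : TrivSqZeroExt A A, (Δ z).snd = R z.fst + S z.snd := by
    intro z
    conv_lhs => rw [← inl_fst_add_inr_snd_eq z]
    rw [hadd, TrivSqZeroExt.snd_add]
  intro x y
  refine TrivSqZeroExt.ext ?_ ?_
  · rw [TrivSqZeroExt.fst_add, TrivSqZeroExt.fst_mul, TrivSqZeroExt.fst_mul,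
      hΔfst, hΔfst, hΔfst, TrivSqZeroExt.fst_mul, hPder]
  · rw [TrivSqZeroExt.snd_add, TrivSqZeroExt.snd_mul, TrivSqZeroExt.snd_mul,
      hΔfst, hΔfst, hΔsnd, hΔsnd, hΔsnd, TrivSqZeroExt.fst_mul, TrivSqZeroExt.snd_mul]
    simp only [smul_eq_mul, op_smul_eq_mul]
    rw [hRder, Sadd, hSval (x.fst * y.snd), hSval (x.snd * y.fst), hSval x.snd, hSval y.snd,
      hPder, hPder, ← hc x.fst y.snd]
    noncomm_ring
end

section
/- Let R be a 2-torsion free unital ring and n ≥ 2. Then every Jordan derivation of the trivial extension T(Mₙ(R), Mₙ(R)) into itself is a derivation. -/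
/-!
Write `B(x, y) = D(xy) - D(x)y - xD(y)`. For every additive `D` it satisfies the cocycle identity
`B(xy, z) + B(x, y)z = B(x, yz) + xB(y, z)`; for a Jordan derivation it is antisymmetric, hence
alternating in the absence of 2-torsion. These two facts alone force `B(e, ·)` to vanish on the
Peirce corners `eAe` and `(1 - e)A(1 - e)` of an idempotent `e`, and, for orthogonal idempotents
`e`, `f` with `f = ba` for some `a ∈ eAf`, also on `eAf`. For a full system of matrix units this
gives `B(Eᵢᵢ, ·) = 0`, and the cocycle identity carries this over to `B(u, ·) = 0`, first for `u`
in an off-diagonal corner `EᵢᵢAEⱼⱼ`, then for diagonal `u = (uEᵢₖ)Eₖᵢ` with `k ≠ i`.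
The matrix units of `Mₙ(R)` sit in the trivial extension as `(Eᵢⱼ, 0)`.
-/

def TwoTorsionFree (A : Type*) [AddMonoid A] : Prop :=
  ∀ a : A, a + a = 0 → a = 0

lemma Matrix.twoTorsionFree {m n R : Type*} [AddMonoid R] (hR : TwoTorsionFree R) :
    TwoTorsionFree (Matrix m n R) :=
  fun _ ha => Matrix.ext fun i j => hR _ (congrFun (congrFun ha i) j)

lemma TrivSqZeroExt.twoTorsionFree {R M : Type*} [AddMonoid R] [AddMonoid M]
    (hR : TwoTorsionFree R) (hM : TwoTorsionFree M) : TwoTorsionFree (TrivSqZeroExt R M) :=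
  fun _ ha => TrivSqZeroExt.ext (hR _ (congrArg fst ha)) (hM _ (congrArg snd ha))

def IsJordanDerivation {A : Type*} [Ring A] (D : A →+ A) : Prop :=
  ∀ x y, D (x * y + y * x) = D x * y + x * D y + D y * x + y * D x

section Defect

variable {A : Type*} [Ring A] {D : A →+ A}

def derivationDefect (D : A →+ A) (x y : A) : A :=
  D (x * y) - D x * y - x * D y

lemma derivationDefect_add_left (x y z : A) :
    derivationDefect D (x + y) z = derivationDefect D x z + derivationDefect D y z := by
  simp only [derivationDefect, add_mul, map_add]
  abel

lemma derivationDefect_add_right (x y z : A) :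
    derivationDefect D x (y + z) = derivationDefect D x y + derivationDefect D x z := by
  simp only [derivationDefect, mul_add, map_add]
  abel

lemma derivationDefect_zero_right (x : A) : derivationDefect D x 0 = 0 := by
  simp [derivationDefect]

lemma derivationDefect_sum_left {ι : Type*} (s : Finset ι) (g : ι → A) (y : A) :
    derivationDefect D (∑ i ∈ s, g i) y = ∑ i ∈ s, derivationDefect D (g i) y :=
  map_sum (AddMonoidHom.mk' (derivationDefect D · y) fun a b => derivationDefect_add_left a b y) g s

lemma derivationDefect_sum_right {ι : Type*} (x : A) (s : Finset ι) (g : ι → A) :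
    derivationDefect D x (∑ i ∈ s, g i) = ∑ i ∈ s, derivationDefect D x (g i) :=
  map_sum (AddMonoidHom.mk' (derivationDefect D x) (derivationDefect_add_right x)) g s

lemma derivationDefect_cocycle (x y z : A) :
    derivationDefect D (x * y) z + derivationDefect D x y * z =
      derivationDefect D x (y * z) + x * derivationDefect D y z := by
  simp only [derivationDefect, mul_assoc]
  noncomm_ring

lemma mul_derivationDefect {c : A} (hc : ∀ z, derivationDefect D c z = 0) (x y : A) :
    c * derivationDefect D x y = derivationDefect D (c * x) y := by
  have h := derivationDefect_cocycle (D := D) c x y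
  rw [hc, hc, zero_mul, add_zero, zero_add] at h
  exact h.symm

end Defect

namespace IsJordanDerivation

variable {A : Type*} [Ring A] {D : A →+ A}

lemma derivationDefect_swap (hD : IsJordanDerivation D) (x y : A) :
    derivationDefect D y x = -derivationDefect D x y := by
  have h := hD x y
  rw [map_add] at h
  simp only [derivationDefect]
  linear_combination (norm := noncomm_ring) h

lemma derivationDefect_self (h2 : TwoTorsionFree A) (hD : IsJordanDerivation D) (x : A) :
    derivationDefect D x x = 0 :=
  h2 _ (by rw [← neg_add_cancel (derivationDefect D x x), ← hD.derivationDefect_swap])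

section Idempotent

variable {e : A}

lemma derivationDefect_idem_mul_left (h2 : TwoTorsionFree A) (hD : IsJordanDerivation D)
    (he : IsIdempotentElem e) (y : A) :
    derivationDefect D e (e * y) = derivationDefect D e y - e * derivationDefect D e y := by
  have h := derivationDefect_cocycle (D := D) e e y
  rw [he.eq, hD.derivationDefect_self h2, zero_mul, add_zero] at h
  exact eq_sub_of_add_eq h.symm

lemma derivationDefect_idem_mul_right (h2 : TwoTorsionFree A) (hD : IsJordanDerivation D)
    (he : IsIdempotentElem e) (y : A) :
    derivationDefect D e (y * e) = derivationDefect D e y - derivationDefect D e y * e := by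
  have h := derivationDefect_cocycle (D := D) y e e
  rw [he.eq, hD.derivationDefect_self h2, mul_zero, add_zero,
    hD.derivationDefect_swap e (y * e), hD.derivationDefect_swap e y] at h
  linear_combination (norm := noncomm_ring) -h

lemma idem_mul_derivationDefect_add (h2 : TwoTorsionFree A) (hD : IsJordanDerivation D)
    (he : IsIdempotentElem e) (y : A) :
    e * derivationDefect D e y + derivationDefect D e y * e = derivationDefect D e y := by
  have h := derivationDefect_cocycle (D := D) e y e
  rw [hD.derivationDefect_swap e (e * y), hD.derivationDefect_swap e y,
    derivationDefect_idem_mul_left h2 hD he, derivationDefect_idem_mul_right h2 hD he] at h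
  exact sub_eq_zero.mp (h2 _ (by linear_combination (norm := noncomm_ring) h))

lemma derivationDefect_idem_corner (h2 : TwoTorsionFree A) (hD : IsJordanDerivation D)
    (he : IsIdempotentElem e) (y : A) : derivationDefect D e (e * y * e) = 0 := by
  have h := idem_mul_derivationDefect_add h2 hD he y
  have h' := congrArg (e * ·) h
  simp only [mul_add, ← mul_assoc, he.eq] at h'
  rw [mul_assoc, derivationDefect_idem_mul_left h2 hD he, derivationDefect_idem_mul_right h2 hD he]
  linear_combination (norm := noncomm_ring) h' - h

lemma derivationDefect_idem_eq_zero_of_orthogonal (h2 : TwoTorsionFree A)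
    (hD : IsJordanDerivation D) (he : IsIdempotentElem e) {y : A} (hey : e * y = 0)
    (hye : y * e = 0) : derivationDefect D e y = 0 := by
  have hl := derivationDefect_idem_mul_left h2 hD he y
  have hr := derivationDefect_idem_mul_right h2 hD he y
  rw [hey, derivationDefect_zero_right] at hl
  rw [hye, derivationDefect_zero_right] at hr
  linear_combination (norm := noncomm_ring) idem_mul_derivationDefect_add h2 hD he y - hl - hr

end Idempotent

section OrthogonalIdempotents

variable {e f m : A}

lemma derivationDefect_add_of_orthogonal (h2 : TwoTorsionFree A) (hD : IsJordanDerivation D)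
    (he : IsIdempotentElem e) (hf : IsIdempotentElem f) (hef : e * f = 0) (hfe : f * e = 0)
    (hem : e * m = m) (hmf : m * f = m) :
    derivationDefect D e m + derivationDefect D f m = 0 := by
  have hsum : IsIdempotentElem (e + f) := he.add hf (by rw [hef, hfe, add_zero])
  have hfm : f * m = 0 := by rw [← hem, ← mul_assoc, hfe, zero_mul]
  have hme : m * e = 0 := by rw [← hmf, mul_assoc, hfe, mul_zero]
  have hcorner : (e + f) * m * (e + f) = m := by
    simp only [add_mul, mul_add, hem, hfm, hme, hmf, add_zero, zero_add]
  rw [← derivationDefect_add_left, ← hcorner, derivationDefect_idem_corner h2 hD hsum]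

lemma mul_derivationDefect_of_orthogonal (h2 : TwoTorsionFree A) (hD : IsJordanDerivation D)
    (he : IsIdempotentElem e) (hf : IsIdempotentElem f) (hef : e * f = 0) (hfe : f * e = 0)
    (hem : e * m = m) (hmf : m * f = m) :
    f * derivationDefect D e m = derivationDefect D e m := by
  have hr := derivationDefect_idem_mul_right h2 hD hf m
  rw [hmf] at hr
  have hfm : derivationDefect D f m = -derivationDefect D e m :=
    eq_neg_of_add_eq_zero_right (derivationDefect_add_of_orthogonal h2 hD he hf hef hfe hem hmf)
  have h := idem_mul_derivationDefect_add h2 hD hf m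
  rw [hfm] at h hr
  linear_combination (norm := noncomm_ring) hr - h

lemma mul_derivationDefect_self_of_orthogonal (h2 : TwoTorsionFree A)
    (hD : IsJordanDerivation D) (he : IsIdempotentElem e) (hf : IsIdempotentElem f)
    (hef : e * f = 0) (hfe : f * e = 0) (hem : e * m = m) (hmf : m * f = m) :
    m * derivationDefect D e m = 0 := by
  have hfm : f * m = 0 := by rw [← hem, ← mul_assoc, hfe, zero_mul]
  have hf' : derivationDefect D f m = -derivationDefect D e m :=
    eq_neg_of_add_eq_zero_right (derivationDefect_add_of_orthogonal h2 hD he hf hef hfe hem hmf)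
  have hcocycle := derivationDefect_cocycle (D := D) m f m
  rw [hmf, hfm, hD.derivationDefect_self h2, derivationDefect_zero_right,
    hD.derivationDefect_swap f, hf'] at hcocycle
  calc m * derivationDefect D e m = e * (m * derivationDefect D e m) := by rw [← mul_assoc, hem]
    _ = -(e * f * (derivationDefect D e m * m)) := by
      rw [mul_assoc e f, ← mul_assoc f, mul_derivationDefect_of_orthogonal h2 hD he hf hef hfe hem hmf]
      linear_combination (norm := noncomm_ring) e * hcocycle
    _ = 0 := by rw [hef, zero_mul, neg_zero]

lemma derivationDefect_eq_zero_of_linked (h2 : TwoTorsionFree A) (hD : IsJordanDerivation D)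
    (he : IsIdempotentElem e) (hf : IsIdempotentElem f) (hef : e * f = 0) (hfe : f * e = 0)
    {a b : A} (hea : e * a = a) (haf : a * f = a) (hba : b * a = f)
    (hem : e * m = m) (hmf : m * f = m) :
    derivationDefect D e m = 0 := by
  have hfactor : ∀ {w}, e * w = w → w * f = w →
      derivationDefect D e w = b * (a * derivationDefect D e w) := fun hew hwf => by
    rw [← mul_assoc, hba, mul_derivationDefect_of_orthogonal h2 hD he hf hef hfe hew hwf]
  have hself : ∀ {w}, e * w = w → w * f = w → w * derivationDefect D e w = 0 :=
    mul_derivationDefect_self_of_orthogonal h2 hD he hf hef hfe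
  have ha : derivationDefect D e a = 0 := by rw [hfactor hea haf, hself hea haf, mul_zero]
  -- polarize `w * B(e, w) = 0` at `w = m + a`
  have hpolar := hself (w := m + a) (by rw [mul_add, hem, hea]) (by rw [add_mul, hmf, haf])
  rw [derivationDefect_add_right, ha, add_zero, add_mul, hself hem hmf, zero_add] at hpolar
  rw [hfactor hem hmf, hpolar, mul_zero]

end OrthogonalIdempotents

lemma derivationDefect_eq_zero_of_mem_corner (hD : IsJordanDerivation D) {e f u : A}
    (he : ∀ z, derivationDefect D e z = 0) (hf : ∀ z, derivationDefect D f z = 0)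
    (hef : e * f = 0) (heu : e * u = u) (huf : u * f = u) (y : A) :
    derivationDefect D u y = 0 := by
  have hcocycle := derivationDefect_cocycle (D := D) u f y
  rw [huf, hD.derivationDefect_swap f, hf, hf, neg_zero, zero_mul, mul_zero, add_zero,
    add_zero] at hcocycle
  calc derivationDefect D u y = e * derivationDefect D u y := by
        rw [mul_derivationDefect he, heu]
    _ = e * -(f * derivationDefect D y u) := by
        rw [hcocycle, hD.derivationDefect_swap (f * y), ← mul_derivationDefect hf]
    _ = 0 := by rw [mul_neg, ← mul_assoc, hef, zero_mul, neg_zero]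

end IsJordanDerivation

structure IsMatrixUnits {ι A : Type*} [Fintype ι] [Semiring A] (E : ι → ι → A) : Prop where
  mul_same : ∀ i j k, E i j * E j k = E i k
  mul_of_ne : ∀ i {j k} l, j ≠ k → E i j * E k l = 0
  sum_diag : ∑ i, E i i = 1

lemma Matrix.isMatrixUnits_single {ι R : Type*} [Fintype ι] [DecidableEq ι] [Semiring R] :
    IsMatrixUnits (fun i j : ι => Matrix.single i j (1 : R)) where
  mul_same i j k := by rw [Matrix.single_mul_single_same, one_mul]
  mul_of_ne i _ _ l h := Matrix.single_mul_single_of_ne 1 i _ _ h 1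
  sum_diag := Matrix.sum_single_one

namespace IsMatrixUnits

variable {ι A : Type*} [Fintype ι]

lemma map [Semiring A] {A' : Type*} [Semiring A'] {E : ι → ι → A} (hE : IsMatrixUnits E)
    (φ : A →+* A') : IsMatrixUnits (fun i j => φ (E i j)) where
  mul_same i j k := by rw [← map_mul, hE.mul_same]
  mul_of_ne i _ _ l h := by rw [← map_mul, hE.mul_of_ne i l h, map_zero]
  sum_diag := by rw [← map_sum, hE.sum_diag, map_one]

variable [Ring A] {E : ι → ι → A} {D : A →+ A}

lemma isIdempotentElem (hE : IsMatrixUnits E) (i : ι) : IsIdempotentElem (E i i) :=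
  hE.mul_same i i i

lemma sum_corners (hE : IsMatrixUnits E) (x : A) : ∑ i, ∑ j, E i i * x * E j j = x :=
  calc ∑ i, ∑ j, E i i * x * E j j = (∑ i, E i i) * x * ∑ j, E j j := by
        rw [Finset.sum_mul, Finset.sum_mul]
        simp only [Finset.mul_sum]
    _ = x := by rw [hE.sum_diag, one_mul, mul_one]

lemma diag_mul_corner (hE : IsMatrixUnits E) (i j : ι) (x : A) :
    E i i * (E i i * x * E j j) = E i i * x * E j j := by
  rw [← mul_assoc, ← mul_assoc, hE.mul_same]

lemma corner_mul_diag (hE : IsMatrixUnits E) (i j : ι) (x : A) :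
    E i i * x * E j j * E j j = E i i * x * E j j := by
  rw [mul_assoc, hE.mul_same]

lemma derivationDefect_diag_corner_of_ne (h2 : TwoTorsionFree A) (hD : IsJordanDerivation D)
    (hE : IsMatrixUnits E) {i j : ι} (hij : i ≠ j) (y : A) :
    derivationDefect D (E i i) (E i i * y * E j j) = 0 ∧
      derivationDefect D (E j j) (E i i * y * E j j) = 0 := by
  have hi := hE.isIdempotentElem i
  have hj := hE.isIdempotentElem j
  have hij' := hE.mul_of_ne i j hij
  have hji' := hE.mul_of_ne j i hij.symm
  have hm := hE.diag_mul_corner i j y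
  have hm' := hE.corner_mul_diag i j y
  have hi0 := hD.derivationDefect_eq_zero_of_linked h2 hi hj hij' hji' (hE.mul_same i i j)
    (hE.mul_same i j j) (hE.mul_same j i j) hm hm'
  refine ⟨hi0, ?_⟩
  have hsum := hD.derivationDefect_add_of_orthogonal h2 hi hj hij' hji' hm hm'
  rwa [hi0, zero_add] at hsum

lemma derivationDefect_diag (h2 : TwoTorsionFree A) (hD : IsJordanDerivation D)
    (hE : IsMatrixUnits E) (r : ι) (y : A) : derivationDefect D (E r r) y = 0 := by
  rw [← hE.sum_corners y, derivationDefect_sum_right]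
  refine Finset.sum_eq_zero fun i _ => ?_
  rw [derivationDefect_sum_right]
  refine Finset.sum_eq_zero fun j _ => ?_
  rcases eq_or_ne r i with rfl | hri
  · rcases eq_or_ne r j with rfl | hrj
    · exact hD.derivationDefect_idem_corner h2 (hE.isIdempotentElem r) y
    · exact (hE.derivationDefect_diag_corner_of_ne h2 hD hrj y).1
  · rcases eq_or_ne r j with rfl | hrj
    · exact (hE.derivationDefect_diag_corner_of_ne h2 hD hri.symm y).2
    · refine hD.derivationDefect_idem_eq_zero_of_orthogonal h2 (hE.isIdempotentElem r) ?_ ?_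
      · rw [← mul_assoc, ← mul_assoc, hE.mul_of_ne r i hri, zero_mul, zero_mul]
      · rw [mul_assoc, hE.mul_of_ne j r hrj.symm, mul_zero]

lemma derivationDefect_corner_of_ne (h2 : TwoTorsionFree A) (hD : IsJordanDerivation D)
    (hE : IsMatrixUnits E) {i j : ι} (hij : i ≠ j) {u : A} (hiu : E i i * u = u)
    (huj : u * E j j = u) (y : A) : derivationDefect D u y = 0 :=
  hD.derivationDefect_eq_zero_of_mem_corner (hE.derivationDefect_diag h2 hD i)
    (hE.derivationDefect_diag h2 hD j) (hE.mul_of_ne i j hij) hiu huj y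

lemma derivationDefect_corner [Nontrivial ι] (h2 : TwoTorsionFree A) (hD : IsJordanDerivation D)
    (hE : IsMatrixUnits E) (i j : ι) (x y : A) :
    derivationDefect D (E i i * x * E j j) y = 0 := by
  rcases eq_or_ne i j with rfl | hij
  · obtain ⟨k, hki⟩ := exists_ne i
    set u := E i i * x * E i i
    have hu : u * E i k * E k i = u := by rw [mul_assoc, hE.mul_same, hE.corner_mul_diag]
    have huik : ∀ z, derivationDefect D (u * E i k) z = 0 :=
      hE.derivationDefect_corner_of_ne h2 hD hki.symm (by rw [← mul_assoc, hE.diag_mul_corner])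
        (by rw [mul_assoc, hE.mul_same])
    have hEki : ∀ z, derivationDefect D (E k i) z = 0 :=
      hE.derivationDefect_corner_of_ne h2 hD hki (hE.mul_same k k i) (hE.mul_same k i i)
    have hcocycle := derivationDefect_cocycle (D := D) (u * E i k) (E k i) y
    rwa [hu, huik, huik, hEki, zero_mul, mul_zero, add_zero, add_zero] at hcocycle
  · exact hE.derivationDefect_corner_of_ne h2 hD hij (hE.diag_mul_corner i j x)
      (hE.corner_mul_diag i j x) y

theorem map_mul_of_isJordanDerivation [Nontrivial ι] (hE : IsMatrixUnits E)
    (h2 : TwoTorsionFree A) (hD : IsJordanDerivation D) (x y : A) :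
    D (x * y) = D x * y + x * D y := by
  have hB : derivationDefect D x y = 0 := by
    rw [← hE.sum_corners x, derivationDefect_sum_left]
    refine Finset.sum_eq_zero fun i _ => ?_
    rw [derivationDefect_sum_left]
    exact Finset.sum_eq_zero fun j _ => hE.derivationDefect_corner h2 hD i j x y
  rwa [derivationDefect, sub_sub, sub_eq_zero] at hB

end IsMatrixUnits

theorem stmt17 (R : Type*) [Ring R] (htf : ∀ r : R, r + r = 0 → r = 0)
    (n : ℕ) (hn : 2 ≤ n) :
    ∀ Δ : TrivSqZeroExt (Matrix (Fin n) (Fin n) R) (Matrix (Fin n) (Fin n) R) →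
        TrivSqZeroExt (Matrix (Fin n) (Fin n) R) (Matrix (Fin n) (Fin n) R),
      (∀ x y, Δ (x + y) = Δ x + Δ y) →
      (∀ x y, Δ (x * y + y * x) = Δ x * y + x * Δ y + Δ y * x + y * Δ x) →
      ∀ x y, Δ (x * y) = Δ x * y + x * Δ y := by
  intro Δ hadd hJ
  have : Nontrivial (Fin n) := Fin.nontrivial_iff_two_le.mpr hn
  have hM : TwoTorsionFree (Matrix (Fin n) (Fin n) R) := Matrix.twoTorsionFree htf
  exact (Matrix.isMatrixUnits_single.map (TrivSqZeroExt.inlHom _ _)).map_mul_of_isJordanDerivation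
    (TrivSqZeroExt.twoTorsionFree hM hM) (D := AddMonoidHom.mk' Δ hadd) hJ
end

section
/- Let A be a unital ring, M a 2-torsion free A-bimodule, and D : A → M a Jordan derivation. Write D = D₁ + D₂ + D₃ + D₄ according to the decomposition M = M₁ ⊕ M₂ ⊕ M₃ ⊕ M₄ where M₁ = 1M1, M₂ = {1m - 1m1}, M₃ = {m1 - 1m1}, M₄ = {m - 1m - m1 + 1m1}. Then D₁ is a Jordan derivation into M₁, D₂(a) = aD₂(1) for all a, D₃(a) = D₃(1)a for all a, and D₄ = 0. -/
theorem stmt19 (A M : Type*) [Ring A] [AddCommGroup M] (bm : RingBimod A M)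
    (htf : ∀ m : M, m + m = 0 → m = 0)
    (D D1 D2 D3 D4 : A → M)
    (hadd : ∀ a b, D (a + b) = D a + D b)
    (hJ : ∀ a b, D (a * b + b * a)
        = bm.r (D a) b + bm.l a (D b) + bm.r (D b) a + bm.l b (D a))
    (hsum : ∀ a, D a = D1 a + D2 a + D3 a + D4 a)
    (h1 : ∀ a, ∃ m, D1 a = bm.l 1 (bm.r m 1))
    (h2 : ∀ a, ∃ m, D2 a = bm.l 1 m - bm.l 1 (bm.r m 1))
    (h3 : ∀ a, ∃ m, D3 a = bm.r m 1 - bm.l 1 (bm.r m 1))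
    (h4 : ∀ a, ∃ m, D4 a = m - bm.l 1 m - bm.r m 1 + bm.l 1 (bm.r m 1)) :
    (∀ a b, D1 (a + b) = D1 a + D1 b) ∧
    (∀ a b, D1 (a * b + b * a)
        = bm.r (D1 a) b + bm.l a (D1 b) + bm.r (D1 b) a + bm.l b (D1 a)) ∧
    (∀ a, D2 a = bm.l a (D2 1)) ∧
    (∀ a, D3 a = bm.r (D3 1) a) ∧
    (∀ a, D4 a = 0) := by
  have lsub : ∀ (a : A) (x y : M), bm.l a (x - y) = bm.l a x - bm.l a y :=
    fun a x y => map_sub (AddMonoidHom.mk' (bm.l a) (bm.l_add a)) x y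
  have lzero : ∀ a : A, bm.l a (0 : M) = 0 :=
    fun a => map_zero (AddMonoidHom.mk' (bm.l a) (bm.l_add a))
  have lneg : ∀ (a : A) (x : M), bm.l a (-x) = - bm.l a x :=
    fun a x => map_neg (AddMonoidHom.mk' (bm.l a) (bm.l_add a)) x
  have rsub : ∀ (x y : M) (a : A), bm.r (x - y) a = bm.r x a - bm.r y a :=
    fun x y a => map_sub (AddMonoidHom.mk' (fun m => bm.r m a) (fun x y => bm.r_add x y a)) x y
  have rzero : ∀ a : A, bm.r (0 : M) a = 0 :=
    fun a => map_zero (AddMonoidHom.mk' (fun m => bm.r m a) (fun x y => bm.r_add x y a))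
  have rneg : ∀ (x : M) (a : A), bm.r (-x) a = - bm.r x a :=
    fun x a => map_neg (AddMonoidHom.mk' (fun m => bm.r m a) (fun x y => bm.r_add x y a)) x
  have le : ∀ (a : A) (x : M), bm.l 1 (bm.l a x) = bm.l a x := fun a x => by
    rw [← bm.mul_l, one_mul]
  have el : ∀ (a : A) (x : M), bm.l a (bm.l 1 x) = bm.l a x := fun a x => by
    rw [← bm.mul_l, mul_one]
  have rf : ∀ (a : A) (x : M), bm.r (bm.r x a) 1 = bm.r x a := fun a x => by
    rw [← bm.r_mul, mul_one]
  have fr : ∀ (a : A) (x : M), bm.r (bm.r x 1) a = bm.r x a := fun a x => by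
    rw [← bm.r_mul, one_mul]
  -- fixed point lemmas
  have e1 : ∀ a, bm.l 1 (D1 a) = D1 a := by
    intro a; obtain ⟨m, hm⟩ := h1 a; rw [hm, le]
  have f1 : ∀ a, bm.r (D1 a) 1 = D1 a := by
    intro a; obtain ⟨m, hm⟩ := h1 a; rw [hm, ← bm.l_r, rf]
  have e2 : ∀ a, bm.l 1 (D2 a) = D2 a := by
    intro a; obtain ⟨m, hm⟩ := h2 a; rw [hm, lsub, le, le]
  have f2 : ∀ a, bm.r (D2 a) 1 = 0 := by
    intro a; obtain ⟨m, hm⟩ := h2 a; rw [hm, rsub, ← bm.l_r, ← bm.l_r, rf, sub_self]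
  have e3 : ∀ a, bm.l 1 (D3 a) = 0 := by
    intro a; obtain ⟨m, hm⟩ := h3 a; rw [hm, lsub, le, sub_self]
  have f3 : ∀ a, bm.r (D3 a) 1 = D3 a := by
    intro a; obtain ⟨m, hm⟩ := h3 a; rw [hm, rsub, rf, ← bm.l_r, rf]
  have e4 : ∀ a, bm.l 1 (D4 a) = 0 := by
    intro a; obtain ⟨m, hm⟩ := h4 a
    rw [hm, bm.l_add, lsub, lsub, le, le]; abel
  have f4 : ∀ a, bm.r (D4 a) 1 = 0 := by
    intro a; obtain ⟨m, hm⟩ := h4 a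
    rw [hm, bm.r_add, rsub, rsub, rf, ← bm.l_r, ← bm.l_r, rf]; abel
  -- evaluation of l 1 ∘ (r · b) on components
  have efr1 : ∀ (x : A) (y : A), bm.l 1 (bm.r (D1 x) y) = bm.r (D1 x) y := by
    intro x y; rw [bm.l_r, e1]
  have efr2 : ∀ (x : A) (y : A), bm.l 1 (bm.r (D2 x) y) = bm.r (D2 x) y := by
    intro x y; rw [bm.l_r, e2]
  have efr3 : ∀ (x : A) (y : A), bm.l 1 (bm.r (D3 x) y) = 0 := by
    intro x y; rw [bm.l_r, e3, rzero]
  have efr4 : ∀ (x : A) (y : A), bm.l 1 (bm.r (D4 x) y) = 0 := by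
    intro x y; rw [bm.l_r, e4, rzero]
  -- star equation
  have star : ∀ a, D a + D a
      = bm.r (D a) 1 + bm.l a (D 1) + bm.r (D 1) a + bm.l 1 (D a) := by
    intro a
    have h := hJ a 1
    rw [mul_one, one_mul, hadd] at h
    exact h
  -- components of D 1
  have hx : D4 1 = D1 1 := by
    have h := star 1
    simp only [hsum, bm.r_add, bm.l_add, ← bm.l_r, le, el, rf, fr, e1, e2, e3, e4,
      f1, f2, f3, f4, efr1, efr2, efr3, efr4, lzero, rzero, add_zero, zero_add] at h
    refine sub_eq_zero.mp (htf _ ?_)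
    rw [← sub_eq_zero] at h
    rw [← h]
    abel
  have hD11 : D1 1 = 0 := by
    calc D1 1 = bm.l 1 (D1 1) := (e1 1).symm
      _ = bm.l 1 (D4 1) := by rw [hx]
      _ = 0 := e4 1
  have hD41 : D4 1 = 0 := hx.trans hD11
  -- f-projection of star
  have hFa : ∀ a, D3 a = bm.l a (D3 1) + bm.r (D2 1) a + bm.r (D3 1) a := by
    intro a
    have h := congrArg (fun x => bm.r x 1) (star a)
    simp only [hsum, bm.r_add, bm.l_add, ← bm.l_r, le, el, rf, fr, e1, e2, e3, e4,
      f1, f2, f3, f4, efr1, efr2, efr3, efr4, hD11, hD41, lzero, rzero,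
      add_zero, zero_add] at h
    refine sub_eq_zero.mp ?_
    rw [← sub_eq_zero] at h
    rw [← h]
    abel
  -- key identity
  have key : ∀ a, bm.l a (D3 1) + bm.r (D2 1) a = 0 := by
    intro a
    have h := congrArg (bm.l 1) (hFa a)
    simp only [bm.l_add, le, el, e1, e2, e3, e4, efr1, efr2, efr3, efr4,
      lzero, rzero, add_zero, zero_add] at h
    exact h.symm
  have k' : ∀ a, bm.r (D2 1) a = - bm.l a (D3 1) := by
    intro a; rw [eq_neg_iff_add_eq_zero, add_comm]; exact key a
  have k'' : ∀ a, bm.l a (D3 1) = - bm.r (D2 1) a := by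
    intro a; rw [eq_neg_iff_add_eq_zero]; exact key a
  -- goal 4 : D3
  have g4 : ∀ a, D3 a = bm.r (D3 1) a := by
    intro a
    have h := hFa a
    rw [k' a] at h
    refine sub_eq_zero.mp ?_
    rw [← sub_eq_zero] at h
    rw [← h]
    abel
  -- goal 3 : D2
  have g3 : ∀ a, D2 a = bm.l a (D2 1) := by
    intro a
    have h := congrArg (bm.l 1) (star a)
    simp only [hsum, bm.r_add, bm.l_add, ← bm.l_r, le, el, rf, fr, e1, e2, e3, e4,
      f1, f2, f3, f4, efr1, efr2, efr3, efr4, hD11, hD41, lzero, rzero,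
      add_zero, zero_add] at h
    rw [k' a] at h
    refine sub_eq_zero.mp ?_
    rw [← sub_eq_zero] at h
    rw [← h]
    abel
  -- goal 5 : D4
  have g5 : ∀ a, D4 a = 0 := by
    intro a
    have h := star a
    simp only [hsum, bm.r_add, bm.l_add, ← bm.l_r, le, el, rf, fr, e1, e2, e3, e4,
      f1, f2, f3, f4, efr1, efr2, efr3, efr4, hD11, hD41, lzero, rzero,
      add_zero, zero_add] at h
    rw [k' a, ← g3 a, ← g4 a] at h
    refine htf _ ?_
    rw [← sub_eq_zero] at h
    rw [← h]
    abel
  -- goal 1 : additivity of D1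
  have g1 : ∀ a b, D1 (a + b) = D1 a + D1 b := by
    intro a b
    have h := congrArg (fun x => bm.l 1 (bm.r x 1)) (hadd a b)
    simp only [hsum, bm.r_add, bm.l_add, ← bm.l_r, le, el, rf, fr, e1, e2, e3, e4,
      f1, f2, f3, f4, efr1, efr2, efr3, efr4, lzero, rzero,
      add_zero, zero_add] at h
    refine sub_eq_zero.mp ?_
    rw [← sub_eq_zero] at h
    rw [← h]
  -- cross terms vanish
  have cross : ∀ x y : A, bm.r (D2 x) y + bm.l x (D3 y) = 0 := by
    intro x y
    rw [g3 x, g4 y, ← bm.l_r, bm.l_r x (D3 1) y, k' y, k'' x, lneg, rneg,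
      ← bm.mul_l, ← bm.r_mul, ← neg_add, key (x * y), neg_zero]
  refine ⟨g1, ?_, g3, g4, g5⟩
  intro a b
  have h := congrArg (fun x => bm.l 1 (bm.r x 1)) (hJ a b)
  simp only [hsum, bm.r_add, bm.l_add, ← bm.l_r, le, el, rf, fr, e1, e2, e3, e4,
    f1, f2, f3, f4, efr1, efr2, efr3, efr4, lzero, rzero,
    add_zero, zero_add] at h
  have c1 : bm.r (D2 a) b = - bm.l a (D3 b) := by
    rw [eq_neg_iff_add_eq_zero]; exact cross a b
  have c2 : bm.r (D2 b) a = - bm.l b (D3 a) := by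
    rw [eq_neg_iff_add_eq_zero]; exact cross b a
  rw [c1, c2] at h
  refine sub_eq_zero.mp ?_
  rw [← sub_eq_zero] at h
  rw [← h]
  abel
end
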